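/- Let Φ = {φ_i(x) = ρ x + a_i}_{i∈Γ} be an equicontractive homothetic self-similar IFS on ℝ^d with attractor K ⊆ B(0,1), μ the self-similar measure associated to a positive probability vector (p_i), and π : Γ^ℕ → K the natural projection. Then for every 𝚒 ∈ Γ^ℕ and k ∈ ℕ there is a probability vector (q_f(𝚒|_k))_{f∈𝒩(𝚒|_k)} such that μ_{𝚒,t} = S*_{t + k log ρ} T_{σ^k 𝚒} ( Σ_{f∈𝒩(𝚒|_k)} q_f(𝚒|_k) · fμ ) whenever t > 0 satisfies B(π(𝚒), e^{−t}) ⊆ B_{𝚒|_k}. -/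

import Mathlib

/-!
Iterating self-similarity `k` times gives `μ = ∑_{|b| = k} p_b · φ_b μ`. Since
`π 𝚒 = φ_{𝚒|k} (π σ^k 𝚒)` and all maps have ratio `ρ`, we have
`e^t (φ_{𝚒|k} y - π 𝚒) = e^{t + k log ρ} (y - π σ^k 𝚒)`, so zooming into `φ_b μ` around `π 𝚒`
is zooming into `(φ_{𝚒|k}⁻¹ ∘ φ_b) μ` around `π σ^k 𝚒`. The measure `μ` is carried by `K`
(its mass at distance `≥ c` from `K` is at most its mass at distance `≥ c / ρ`), so the pieces
with `K_b ∩ B_{𝚒|k} = ∅` miss the window `B(π 𝚒, e^{-t})`; the remaining weights `p_b`,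
normalised, give `q`, and the normalisation in `S*` absorbs the constant.
-/

open Filter Metric MeasureTheory
open scoped ENNReal

/-- Composition `φ_𝚊` along a finite word. -/
def wordMap {Γ α : Type*} (φ : Γ → α → α) : List Γ → α → α
  | [] => id
  | i :: a => φ i ∘ wordMap φ a

/-- The first `k` letters of an infinite word, as a finite word. -/
def wordOf {Γ : Type*} (i : ℕ → Γ) (k : ℕ) : List Γ := List.ofFn (fun j : Fin k => i j)

/-- The left shift on `Γ^ℕ`. -/
def shift {Γ : Type*} (i : ℕ → Γ) : ℕ → Γ := fun n => i (n + 1)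

/-- The neighbourhood system in the equicontractive case:
`𝒩(𝚊) = { φ_𝚊⁻¹ ∘ φ_𝚋 : 𝚋 ∈ Γ^{|𝚊|}, K_𝚋 ∩ B_𝚊 ≠ ∅ }`. -/
def nbhdE {Γ : Type*} {d : ℕ}
    (φ : Γ → EuclideanSpace ℝ (Fin d) → EuclideanSpace ℝ (Fin d))
    (K : Set (EuclideanSpace ℝ (Fin d))) (a : List Γ) :
    Set (EuclideanSpace ℝ (Fin d) → EuclideanSpace ℝ (Fin d)) :=
  {f | ∃ b : List Γ, b.length = a.length ∧
    (wordMap φ b '' K ∩ wordMap φ a '' closedBall 0 1).Nonempty ∧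
    wordMap φ a ∘ f = wordMap φ b}

/-- The normalized zoom-in `S*_t ν`: push forward by `y ↦ e^t y`, restrict to
`B(0,1)`, normalize. -/
noncomputable def zoomIn {d : ℕ} (ν : Measure (EuclideanSpace ℝ (Fin d))) (t : ℝ) :
    Measure (EuclideanSpace ℝ (Fin d)) :=
  (((Measure.map (fun y => Real.exp t • y) ν).restrict (closedBall 0 1)) Set.univ)⁻¹ •
    ((Measure.map (fun y => Real.exp t • y) ν).restrict (closedBall 0 1))

/-- The scenery measure `μ_{x,t} = S*_t T_x μ`. -/
noncomputable def scenery {d : ℕ} (μ : Measure (EuclideanSpace ℝ (Fin d)))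
    (x : EuclideanSpace ℝ (Fin d)) (t : ℝ) : Measure (EuclideanSpace ℝ (Fin d)) :=
  zoomIn (Measure.map (fun y => y - x) μ) t

open Set
open scoped NNReal

section Words

variable {Γ α : Type*}

theorem wordMap_append (φ : Γ → α → α) (u v : List Γ) (x : α) :
    wordMap φ (u ++ v) x = wordMap φ u (wordMap φ v x) := by
  induction u with
  | nil => rfl
  | cons i u ih => exact congrArg (φ i) ih

theorem measurable_wordMap [MeasurableSpace α] {φ : Γ → α → α} (hφ : ∀ i, Measurable (φ i))
    (w : List Γ) : Measurable (wordMap φ w) := by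
  induction w with
  | nil => exact measurable_id
  | cons i w ih => exact (hφ i).comp ih

theorem shift_iterate_apply (i : ℕ → Γ) (k n : ℕ) : (shift^[k] i) n = i (n + k) := by
  induction k generalizing i with
  | zero => rfl
  | succ k ih => rw [Function.iterate_succ_apply, ih]; simp only [shift]; ring_nf

theorem length_wordOf (i : ℕ → Γ) (k : ℕ) : (wordOf i k).length = k := List.length_ofFn

theorem wordOf_add (i : ℕ → Γ) (k m : ℕ) :
    wordOf i (k + m) = wordOf i k ++ wordOf (shift^[k] i) m := by
  simp only [wordOf, List.ofFn_add, shift_iterate_apply, Fin.val_natAdd, Fin.val_castLE, add_comm]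

end Words

section Affine

variable {Γ E : Type*} [NormedAddCommGroup E] [NormedSpace ℝ E] {ρ : ℝ} {a : Γ → E}
  {φ : Γ → E → E}

theorem wordMap_eq_smul_add (hφ : ∀ i x, φ i x = ρ • x + a i) (w : List Γ) (x : E) :
    wordMap φ w x = ρ ^ w.length • x + wordMap φ w 0 := by
  induction w with
  | nil => simp [wordMap]
  | cons i w ih =>
    simp only [wordMap, Function.comp_apply, hφ, ih, List.length_cons, pow_succ', mul_smul,
      smul_add]
    abel

theorem wordMap_sub_wordMap (hφ : ∀ i x, φ i x = ρ • x + a i) (w : List Γ) (x y : E) :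
    wordMap φ w x - wordMap φ w y = ρ ^ w.length • (x - y) := by
  rw [wordMap_eq_smul_add hφ w x, wordMap_eq_smul_add hφ w y, smul_sub]
  abel

theorem continuous_wordMap (hφ : ∀ i x, φ i x = ρ • x + a i) (w : List Γ) :
    Continuous (wordMap φ w) := by
  rw [show wordMap φ w = fun x => ρ ^ w.length • x + wordMap φ w 0 from
    funext (wordMap_eq_smul_add hφ w)]
  fun_prop

theorem wordMap_injective (hφ : ∀ i x, φ i x = ρ • x + a i) (hρ : ρ ≠ 0) (w : List Γ) :
    Function.Injective (wordMap φ w) := fun x y hxy => by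
  rw [← sub_eq_zero, ← smul_right_injective E (pow_ne_zero w.length hρ) |>.eq_iff, smul_zero,
    ← wordMap_sub_wordMap hφ, hxy, sub_self]

/-- The map `φ_A⁻¹ ∘ φ_B` for words of equal length: a translation. -/
noncomputable def neighbourMap (ρ : ℝ) (φ : Γ → E → E) (A B : List Γ) : E → E :=
  fun y => y + (ρ ^ A.length)⁻¹ • (wordMap φ B 0 - wordMap φ A 0)

theorem wordMap_comp_neighbourMap (hφ : ∀ i x, φ i x = ρ • x + a i) (hρ : ρ ≠ 0)
    {A B : List Γ} (hAB : B.length = A.length) :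
    wordMap φ A ∘ neighbourMap ρ φ A B = wordMap φ B := by
  ext1 y
  rw [Function.comp_apply, neighbourMap, wordMap_eq_smul_add hφ A, wordMap_eq_smul_add hφ B y, hAB,
    smul_add, smul_inv_smul₀ (pow_ne_zero _ hρ)]
  abel

theorem eq_neighbourMap_of_wordMap_comp (hφ : ∀ i x, φ i x = ρ • x + a i) (hρ : ρ ≠ 0)
    {A B : List Γ} (hAB : B.length = A.length) {f : E → E} (hf : wordMap φ A ∘ f = wordMap φ B) :
    f = neighbourMap ρ φ A B :=
  (wordMap_injective hφ hρ A).comp_left <| hf.trans (wordMap_comp_neighbourMap hφ hρ hAB).symm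

theorem lipschitzWith_of_eq_smul_add (hφ : ∀ i x, φ i x = ρ • x + a i) (hρ : 0 ≤ ρ) (i : Γ) :
    LipschitzWith ⟨ρ, hρ⟩ (φ i) := LipschitzWith.of_dist_le_mul fun x y => by
  rw [dist_eq_norm, dist_eq_norm, hφ, hφ, add_sub_add_right_eq_sub, ← smul_sub, norm_smul,
    Real.norm_of_nonneg hρ]
  exact le_rfl

theorem continuous_neighbourMap (A B : List Γ) : Continuous (neighbourMap ρ φ A B) := by
  unfold neighbourMap; fun_prop

end Affine

theorem proj_eq_wordMap_proj_shift {Γ α : Type*} [TopologicalSpace α] [T2Space α]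
    {φ : Γ → α → α} {π : (ℕ → Γ) → α} {x₀ : α}
    (hπ : ∀ i, Tendsto (fun k => wordMap φ (wordOf i k) x₀) atTop (nhds (π i)))
    (i : ℕ → Γ) (k : ℕ) (hc : Continuous (wordMap φ (wordOf i k))) :
    π i = wordMap φ (wordOf i k) (π (shift^[k] i)) := by
  have hshift : Tendsto (fun m => wordMap φ (wordOf i k) (wordMap φ (wordOf (shift^[k] i) m) x₀))
      atTop (nhds (π i)) := by
    convert (hπ i).comp (tendsto_add_atTop_nat k) using 2 with m
    rw [Function.comp_apply, add_comm, wordOf_add, wordMap_append]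
  exact tendsto_nhds_unique hshift ((hc.tendsto _).comp (hπ (shift^[k] i)))

section SelfSimilarMeasure

variable {Γ α : Type*} [Fintype Γ] [MeasurableSpace α] {φ : Γ → α → α} {w : Γ → ℝ≥0∞}
  {μ : Measure α}

noncomputable def wordWeight (w : Γ → ℝ≥0∞) {n : ℕ} (b : Fin n → Γ) : ℝ≥0∞ := ∏ j, w (b j)

theorem eq_sum_wordWeight_smul_map_wordMap (hφ : ∀ i, Measurable (φ i))
    (hμ : μ = ∑ i, w i • μ.map (φ i)) (n : ℕ) :
    μ = ∑ b : Fin n → Γ, wordWeight w b • μ.map (wordMap φ (List.ofFn b)) := by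
  induction n with
  | zero => simp [wordWeight, wordMap]
  | succ n ih =>
    calc μ = ∑ i, w i • μ.map (φ i) := hμ
      _ = ∑ i, ∑ b : Fin n → Γ,
          (w i * wordWeight w b) • μ.map (φ i ∘ wordMap φ (List.ofFn b)) := by
        refine Finset.sum_congr rfl fun i _ => ?_
        conv_lhs => rw [ih]
        rw [Measure.map_finset_sum (hφ i).aemeasurable, Finset.smul_sum]
        refine Finset.sum_congr rfl fun b _ => ?_
        rw [Measure.map_smul, Measure.map_map (hφ i) (measurable_wordMap hφ _), smul_smul]
      _ = _ := by
        rw [← Fintype.sum_prod_type']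
        exact Fintype.sum_equiv (Fin.consEquiv fun _ => Γ) _ _ fun ⟨i, b⟩ => by
          simp [wordWeight, Fin.prod_univ_succ, List.ofFn_succ, wordMap]

end SelfSimilarMeasure

theorem measure_setOf_pos_eq_zero_of_le_div {α : Type*} [MeasurableSpace α] {μ : Measure α}
    [IsFiniteMeasure μ] {g : α → ℝ} (hg : Measurable g) {r : ℝ} (hr0 : 0 < r) (hr1 : r < 1)
    (h : ∀ c > 0, μ {y | c ≤ g y} ≤ μ {y | c / r ≤ g y}) : μ {y | 0 < g y} = 0 := by
  have hiter : ∀ c > 0, ∀ n : ℕ, μ {y | c ≤ g y} ≤ μ {y | c / r ^ n ≤ g y} := by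
    intro c hc n
    induction n with
    | zero => simp
    | succ n ih =>
      calc _ ≤ _ := ih
        _ ≤ μ {y | c / r ^ n / r ≤ g y} := h _ (by positivity)
        _ = _ := by rw [div_div, ← pow_succ]
  have hnull : ∀ c > 0, μ {y | c ≤ g y} = 0 := by
    intro c hc
    have hanti : Antitone fun n : ℕ => {y | c / r ^ n ≤ g y} := fun m n hmn y hy =>
      le_trans (div_le_div_of_nonneg_left hc.le (pow_pos hr0 n)
        (pow_le_pow_of_le_one hr0.le hr1.le hmn)) hy
    have hempty : ⋂ n : ℕ, {y | c / r ^ n ≤ g y} = ∅ := by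
      refine eq_empty_of_forall_notMem fun y hy => ?_
      have htend : Tendsto (fun n : ℕ => c / r ^ n) atTop atTop := by
        simpa [div_eq_mul_inv, inv_pow] using
          (tendsto_pow_atTop_atTop_of_one_lt ((one_lt_inv₀ hr0).mpr hr1)).const_mul_atTop hc
      obtain ⟨n, hn⟩ := (htend.eventually_gt_atTop (g y)).exists
      exact (mem_iInter.mp hy n).not_gt hn
    have hlim := tendsto_measure_iInter_atTop
      (fun n => (measurableSet_le measurable_const hg).nullMeasurableSet) hanti
      ⟨0, measure_ne_top μ _⟩
    rw [hempty, measure_empty] at hlim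
    exact nonpos_iff_eq_zero.mp (ge_of_tendsto hlim (Eventually.of_forall (hiter c hc)))
  have hcover : {y | 0 < g y} ⊆ ⋃ n : ℕ, {y | 1 / (n + 1 : ℝ) ≤ g y} := fun y hy => by
    obtain ⟨n, hn⟩ := exists_nat_one_div_lt (show 0 < g y from hy)
    exact mem_iUnion.mpr ⟨n, hn.le⟩
  exact measure_mono_null hcover (measure_iUnion_null fun n => hnull _ (by positivity))

theorem infDist_le_mul_infDist_of_mapsTo {α : Type*} [PseudoMetricSpace α] {f : α → α}
    {K : Set α} (hK : K.Nonempty) (hf : MapsTo f K K) {r : ℝ≥0} (hr : 0 < r)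
    (hlip : LipschitzWith r f) (x : α) : infDist (f x) K ≤ r * infDist x K := by
  have hr' : (0 : ℝ) < r := hr
  have : infDist (f x) K / r ≤ infDist x K := (le_infDist hK).2 fun z hz =>
    (div_le_iff₀' hr').2 ((infDist_le_dist_of_mem (hf hz)).trans (hlip.dist_le_mul x z))
  rwa [div_le_iff₀' hr'] at this

theorem measure_compl_eq_zero_of_selfSimilar {Γ α : Type*} [Fintype Γ] [PseudoMetricSpace α]
    [MeasurableSpace α] [BorelSpace α] {φ : Γ → α → α} {w : Γ → ℝ≥0∞}
    {μ : Measure α} [IsFiniteMeasure μ] {K : Set α} (hKc : IsClosed K) (hKne : K.Nonempty)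
    (hK : ∀ i, MapsTo (φ i) K K) {r : ℝ≥0} (hr0 : 0 < r) (hr1 : r < 1)
    (hlip : ∀ i, LipschitzWith r (φ i)) (hμ : μ = ∑ i, w i • μ.map (φ i)) (hw : ∑ i, w i = 1) :
    μ Kᶜ = 0 := by
  have hφm : ∀ i, Measurable (φ i) := fun i => (hlip i).continuous.measurable
  have hg : Measurable (infDist · K) := (continuous_infDist_pt K).measurable
  have hcompl : Kᶜ = {y | 0 < infDist y K} := by
    ext y; exact hKc.notMem_iff_infDist_pos hKne
  rw [hcompl]
  refine measure_setOf_pos_eq_zero_of_le_div hg hr0 hr1 fun c hc => ?_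
  have hpre : ∀ i, φ i ⁻¹' {y | c ≤ infDist y K} ⊆ {y | c / r ≤ infDist y K} := fun i y hy =>
    (div_le_iff₀' (NNReal.coe_pos.mpr hr0)).2
      (hy.trans (infDist_le_mul_infDist_of_mapsTo hKne (hK i) hr0 (hlip i) y))
  calc μ {y | c ≤ infDist y K}
      = ∑ i, w i * μ (φ i ⁻¹' {y | c ≤ infDist y K}) := by
        conv_lhs => rw [hμ]
        simp only [Measure.coe_finsetSum, Finset.sum_apply, Measure.smul_apply, smul_eq_mul,
          Measure.map_apply (hφm _) (measurableSet_le measurable_const hg)]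
    _ ≤ ∑ i, w i * μ {y | c / r ≤ infDist y K} := by
        gcongr with i; exact hpre i
    _ = μ {y | c / r ≤ infDist y K} := by rw [← Finset.sum_mul, hw, one_mul]

theorem Finset.sum_image_sum_fiberwise_smul {ι β R M : Type*} [DecidableEq β] [Semiring R]
    [AddCommMonoid M] [Module R M] (s : Finset ι) (g : ι → β) (w : ι → R) (m : β → M) :
    ∑ f ∈ s.image g, (∑ b ∈ s with g b = f, w b) • m f = ∑ b ∈ s, w b • m (g b) := by
  simp_rw [Finset.sum_smul]
  rw [← Finset.sum_fiberwise_of_maps_to fun b hb => Finset.mem_image_of_mem g hb]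
  refine Finset.sum_congr rfl fun f _ => Finset.sum_congr rfl fun b hb => ?_
  rw [(Finset.mem_filter.1 hb).2]

theorem smul_sub_mem_closedBall_zero_iff {E : Type*} [NormedAddCommGroup E] [NormedSpace ℝ E]
    {x y : E} {t : ℝ} :
    Real.exp t • (y - x) ∈ closedBall 0 1 ↔ y ∈ closedBall x (Real.exp (-t)) := by
  rw [mem_closedBall_zero_iff, norm_smul, Real.norm_eq_abs, Real.abs_exp, mem_closedBall,
    dist_eq_norm, Real.exp_neg, ← one_div, le_div_iff₀' (Real.exp_pos t)]

section Neighbours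

variable {Γ E : Type*} [Fintype Γ] [NormedAddCommGroup E]

open Classical in
noncomputable def neighbourWords (φ : Γ → E → E) (K : Set E) (A : List Γ) (k : ℕ) :
    Finset (Fin k → Γ) :=
  {b | (wordMap φ (List.ofFn b) '' K ∩ wordMap φ A '' closedBall 0 1).Nonempty}

theorem ofFn_mem_neighbourWords {φ : Γ → E → E} {K : Set E} (hKne : K.Nonempty)
    (hKball : K ⊆ closedBall 0 1) (i : ℕ → Γ) (k : ℕ) :
    (fun j : Fin k => i j) ∈ neighbourWords φ K (wordOf i k) k := by
  obtain ⟨y, hy⟩ := hKne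
  simp only [neighbourWords, Finset.mem_filter, Finset.mem_univ, true_and]
  exact ⟨wordMap φ (wordOf i k) y, mem_image_of_mem _ hy, mem_image_of_mem _ (hKball hy)⟩

theorem coe_image_neighbourWords {d : ℕ}
    [DecidableEq (EuclideanSpace ℝ (Fin d) → EuclideanSpace ℝ (Fin d))]
    {ρ : ℝ} {a : Γ → EuclideanSpace ℝ (Fin d)}
    {φ : Γ → EuclideanSpace ℝ (Fin d) → EuclideanSpace ℝ (Fin d)}
    (hφ : ∀ i x, φ i x = ρ • x + a i) (hρ : ρ ≠ 0) (K : Set (EuclideanSpace ℝ (Fin d)))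
    {A : List Γ} {k : ℕ} (hA : A.length = k) :
    ↑((neighbourWords φ K A k).image fun b => neighbourMap ρ φ A (List.ofFn b)) = nbhdE φ K A := by
  ext f
  simp only [Finset.coe_image, mem_image, Finset.mem_coe, neighbourWords, Finset.mem_filter,
    Finset.mem_univ, true_and, nbhdE, mem_ofPred_eq]
  constructor
  · rintro ⟨b, hb, rfl⟩
    have hlen : (List.ofFn b).length = A.length := by rw [List.length_ofFn, hA]
    exact ⟨List.ofFn b, hlen, hb, wordMap_comp_neighbourMap hφ hρ hlen⟩
  · rintro ⟨B, hB, hne, hf⟩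
    obtain ⟨b, rfl⟩ : ∃ b : Fin k → Γ, List.ofFn b = B :=
      ⟨fun j => B[j.val]'(by omega), List.ext_getElem (by simp; omega) (by simp)⟩
    exact ⟨b, hne, (eq_neighbourMap_of_wordMap_comp hφ hρ hB hf).symm⟩

end Neighbours

theorem map_smul_sub_restrict_eq_sum_neighbourMap {Γ E : Type*} [Fintype Γ]
    [NormedAddCommGroup E] [NormedSpace ℝ E] [MeasurableSpace E] [BorelSpace E] {ρ : ℝ}
    {a : Γ → E} {φ : Γ → E → E} (hφ : ∀ i x, φ i x = ρ • x + a i) (hρ : 0 < ρ)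
    {w : Γ → ℝ≥0∞} {μ : Measure E} (hμ : μ = ∑ i, w i • μ.map (φ i)) {K : Set E}
    (hK : μ Kᶜ = 0) {A : List Γ} {k : ℕ} (hA : A.length = k) {z : E} {t : ℝ}
    (hB : closedBall (wordMap φ A z) (Real.exp (-t)) ⊆ wordMap φ A '' closedBall 0 1) :
    (μ.map fun y => Real.exp t • (y - wordMap φ A z)).restrict (closedBall 0 1) =
      ((∑ b ∈ neighbourWords φ K A k,
          wordWeight w b • μ.map (neighbourMap ρ φ A (List.ofFn b))).map
        fun y => Real.exp (t + k * Real.log ρ) • (y - z)).restrict (closedBall 0 1) := by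
  set g : E → E := fun y => Real.exp t • (y - wordMap φ A z)
  set h : E → E := fun y => Real.exp (t + k * Real.log ρ) • (y - z)
  set W : (Fin k → Γ) → E → E := fun b => wordMap φ (List.ofFn b)
  have hgm : Measurable g := by fun_prop
  have hhm : Measurable h := by fun_prop
  have hWm : ∀ b, Measurable (W b) := fun b => (continuous_wordMap hφ _).measurable
  -- the paper's `S_{k log ρ⁻¹} T_{π 𝚒} = T_{π σ^k 𝚒} ∘ φ_{𝚒|k}⁻¹`
  have hgA : g ∘ wordMap φ A = h := by
    ext1 y
    simp only [g, h, Function.comp_apply, wordMap_sub_wordMap hφ, hA, smul_smul, Real.exp_add,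
      Real.exp_nat_mul, Real.exp_log hρ]
  have hgW : ∀ b, g ∘ W b = h ∘ neighbourMap ρ φ A (List.ofFn b) := fun b => by
    rw [← hgA, Function.comp_assoc,
      wordMap_comp_neighbourMap hφ hρ.ne' (by rw [List.length_ofFn, hA])]
  have hfar : ∀ b ∉ neighbourWords φ K A k, (μ.map (g ∘ W b)).restrict (closedBall 0 1) = 0 := by
    intro b hb
    rw [Measure.restrict_eq_zero, Measure.map_apply (hgm.comp (hWm b)) measurableSet_closedBall]
    refine measure_mono_null ?_ hK
    intro y hy hyK
    apply hb
    simp only [neighbourWords, Finset.mem_filter, Finset.mem_univ, true_and]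
    exact ⟨W b y, mem_image_of_mem _ hyK, hB (smul_sub_mem_closedBall_zero_iff.1 hy)⟩
  calc (μ.map g).restrict (closedBall 0 1)
      = ∑ b : Fin k → Γ, wordWeight w b • (μ.map (g ∘ W b)).restrict (closedBall 0 1) := by
        have hφm : ∀ i, Measurable (φ i) := fun i => (continuous_wordMap hφ [i]).measurable
        conv_lhs => rw [eq_sum_wordWeight_smul_map_wordMap hφm hμ k]
        rw [Measure.map_finset_sum hgm.aemeasurable, ← Measure.restrictₗ_apply, map_sum]
        simp only [Measure.restrictₗ_apply, Measure.map_smul, Measure.map_map hgm (hWm _),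
          Measure.restrict_smul, W]
    _ = ∑ b ∈ neighbourWords φ K A k,
          wordWeight w b • (μ.map (g ∘ W b)).restrict (closedBall 0 1) :=
        (Finset.sum_subset (Finset.subset_univ _) fun b _ hb => by rw [hfar b hb, smul_zero]).symm
    _ = _ := by
        rw [Measure.map_finset_sum hhm.aemeasurable, ← Measure.restrictₗ_apply, map_sum]
        simp only [Measure.restrictₗ_apply, Measure.map_smul,
          Measure.map_map hhm (continuous_neighbourMap _ _).measurable, Measure.restrict_smul, hgW]

section Zoom

variable {d : ℕ}

theorem zoomIn_smul (ν : Measure (EuclideanSpace ℝ (Fin d))) (t : ℝ) {c : ℝ≥0∞} (hc0 : c ≠ 0)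
    (hct : c ≠ ∞) : zoomIn (c • ν) t = zoomIn ν t := by
  simp only [zoomIn, Measure.map_smul, Measure.restrict_smul, Measure.smul_apply, smul_eq_mul,
    smul_smul]
  rw [ENNReal.mul_inv (.inl hc0) (.inl hct), mul_right_comm, ENNReal.inv_mul_cancel hc0 hct,
    one_mul]

theorem zoomIn_map_sub_congr {ν ν' : Measure (EuclideanSpace ℝ (Fin d))}
    {x z : EuclideanSpace ℝ (Fin d)} {t s : ℝ}
    (h : (ν.map fun y => Real.exp t • (y - x)).restrict (closedBall 0 1) =
      (ν'.map fun y => Real.exp s • (y - z)).restrict (closedBall 0 1)) :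
    zoomIn (ν.map (· - x)) t = zoomIn (ν'.map (· - z)) s := by
  have hmap : ∀ (ν : Measure (EuclideanSpace ℝ (Fin d))) x t,
      (ν.map (· - x)).map (Real.exp t • ·) = ν.map fun y => Real.exp t • (y - x) := fun ν x t =>
    Measure.map_map (by fun_prop) (by fun_prop)
  simp only [zoomIn, hmap, h]

end Zoom

theorem stmt7_general {Γ : Type*} [Fintype Γ] {d : ℕ}
    (ρ : ℝ) (hρ : ρ ∈ Set.Ioo (0 : ℝ) 1) (a : Γ → EuclideanSpace ℝ (Fin d))
    (φ : Γ → EuclideanSpace ℝ (Fin d) → EuclideanSpace ℝ (Fin d))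
    (hφ : ∀ i x, φ i x = ρ • x + a i)
    (K : Set (EuclideanSpace ℝ (Fin d))) (hKc : IsCompact K) (hKne : K.Nonempty)
    (hattr : K = ⋃ i, φ i '' K) (hKball : K ⊆ closedBall 0 1)
    (π : (ℕ → Γ) → EuclideanSpace ℝ (Fin d))
    (hπ : ∀ i : ℕ → Γ, Tendsto (fun k => wordMap φ (wordOf i k) 0) atTop (nhds (π i)))
    (p : Γ → ℝ) (hp : ∀ i, 0 < p i) (hp1 : ∑ i, p i = 1)
    (μ : Measure (EuclideanSpace ℝ (Fin d))) [IsProbabilityMeasure μ]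
    (hμ : μ = ∑ i, (ENNReal.ofReal (p i)) • Measure.map (φ i) μ) :
    ∀ (i : ℕ → Γ) (k : ℕ),
      ∃ (s : Finset (EuclideanSpace ℝ (Fin d) → EuclideanSpace ℝ (Fin d)))
        (q : (EuclideanSpace ℝ (Fin d) → EuclideanSpace ℝ (Fin d)) → ℝ≥0∞),
        (↑s : Set (EuclideanSpace ℝ (Fin d) → EuclideanSpace ℝ (Fin d)))
            = nbhdE φ K (wordOf i k) ∧
        (∑ f ∈ s, q f = 1) ∧
        ∀ t : ℝ, 0 < t →
          closedBall (π i) (Real.exp (-t)) ⊆ wordMap φ (wordOf i k) '' closedBall 0 1 →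
          scenery μ (π i) t =
            zoomIn (Measure.map (fun y => y - π (shift^[k] i))
                (∑ f ∈ s, q f • Measure.map f μ)) (t + k * Real.log ρ) := by
  classical
  intro i k
  obtain ⟨hρ0, hρ1⟩ := hρ
  set A := wordOf i k
  set w : Γ → ℝ≥0∞ := fun j => ENNReal.ofReal (p j)
  set S := neighbourWords φ K A k
  set F : (Fin k → Γ) → _ := fun b => neighbourMap ρ φ A (List.ofFn b)
  set Z := ∑ b ∈ S, wordWeight w b
  have hZ0 : Z ≠ 0 := fun hZ =>
    (Finset.prod_ne_zero_iff.2 fun j _ => (ENNReal.ofReal_pos.2 (hp _)).ne')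
      (Finset.sum_eq_zero_iff.1 hZ _ (ofFn_mem_neighbourWords hKne hKball i k))
  have hZtop : Z ≠ ∞ :=
    ENNReal.sum_ne_top.2 fun b _ => ENNReal.prod_ne_top fun j _ => ENNReal.ofReal_ne_top
  have hsupp : μ Kᶜ = 0 :=
    measure_compl_eq_zero_of_selfSimilar hKc.isClosed hKne
      (fun j y hy => hattr ▸ mem_iUnion.2 ⟨j, mem_image_of_mem _ hy⟩) (r := ⟨ρ, hρ0.le⟩) hρ0 hρ1
      (lipschitzWith_of_eq_smul_add hφ hρ0.le) hμ
      (by rw [← ENNReal.ofReal_sum_of_nonneg fun j _ => (hp j).le, hp1, ENNReal.ofReal_one])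
  refine ⟨S.image F, fun f => ∑ b ∈ S with F b = f, Z⁻¹ * wordWeight w b,
    coe_image_neighbourWords hφ hρ0.ne' K (length_wordOf i k), ?_, fun t _ hB => ?_⟩
  · rw [Finset.sum_fiberwise_of_maps_to fun b hb => Finset.mem_image_of_mem F hb, ← Finset.mul_sum,
      ENNReal.inv_mul_cancel hZ0 hZtop]
  · simp_rw [Finset.sum_image_sum_fiberwise_smul, ← smul_smul, ← Finset.smul_sum, Measure.map_smul]
    rw [zoomIn_smul _ _ (ENNReal.inv_ne_zero.2 hZtop) (ENNReal.inv_ne_top.2 hZ0)]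
    rw [proj_eq_wordMap_proj_shift hπ i k (continuous_wordMap hφ _)] at hB ⊢
    exact zoomIn_map_sub_congr
      (map_smul_sub_restrict_eq_sum_neighbourMap hφ hρ0 hμ hsupp (length_wordOf i k) hB)

/-- **Representation of the scenery via neighbourhood systems.**
For the self-similar measure `μ` of an equicontractive homothetic IFS
`φ_i(x) = ρ x + a_i`, for every `𝚒 ∈ Γ^ℕ` and `k ∈ ℕ` there is a probability
vector `(q_f)_{f ∈ 𝒩(𝚒|_k)}` with
`μ_{𝚒,t} = S*_{t + k log ρ} T_{σ^k 𝚒} (∑_f q_f · fμ)`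
whenever `t > 0` satisfies `B(π 𝚒, e^{-t}) ⊆ B_{𝚒|_k}`. -/
theorem stmt7 {Γ : Type*} [Fintype Γ] [Nonempty Γ] {d : ℕ}
    (ρ : ℝ) (hρ : ρ ∈ Set.Ioo (0 : ℝ) 1) (a : Γ → EuclideanSpace ℝ (Fin d))
    (φ : Γ → EuclideanSpace ℝ (Fin d) → EuclideanSpace ℝ (Fin d))
    (hφ : ∀ i x, φ i x = ρ • x + a i)
    (K : Set (EuclideanSpace ℝ (Fin d))) (hKc : IsCompact K) (hKne : K.Nonempty)
    (hattr : K = ⋃ i, φ i '' K) (hKball : K ⊆ closedBall 0 1)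
    (π : (ℕ → Γ) → EuclideanSpace ℝ (Fin d))
    (hπ : ∀ i : ℕ → Γ, Tendsto (fun k => wordMap φ (wordOf i k) 0) atTop (nhds (π i)))
    (p : Γ → ℝ) (hp : ∀ i, 0 < p i) (hp1 : ∑ i, p i = 1)
    (μ : Measure (EuclideanSpace ℝ (Fin d))) [IsProbabilityMeasure μ]
    (hμ : μ = ∑ i, (ENNReal.ofReal (p i)) • Measure.map (φ i) μ) :
    ∀ (i : ℕ → Γ) (k : ℕ),
      ∃ (s : Finset (EuclideanSpace ℝ (Fin d) → EuclideanSpace ℝ (Fin d)))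
        (q : (EuclideanSpace ℝ (Fin d) → EuclideanSpace ℝ (Fin d)) → ℝ≥0∞),
        (↑s : Set (EuclideanSpace ℝ (Fin d) → EuclideanSpace ℝ (Fin d)))
            = nbhdE φ K (wordOf i k) ∧
        (∑ f ∈ s, q f = 1) ∧
        ∀ t : ℝ, 0 < t →
          closedBall (π i) (Real.exp (-t)) ⊆ wordMap φ (wordOf i k) '' closedBall 0 1 →
          scenery μ (π i) t =
            zoomIn (Measure.map (fun y => y - π (shift^[k] i))
                (∑ f ∈ s, q f • Measure.map f μ)) (t + k * Real.log ρ) :=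
  stmt7_general ρ hρ a φ hφ K hKc hKne hattr hKball π hπ p hp hp1 μ hμ
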